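/- For every n ∈ ℕ there is a constant B > 0 such that ‖Σ_{k,l} c_{k,l} T^t_{(k,l)} φ_n‖²_{L²(ℝ²)} ≤ B ‖{c_{k,l}}‖²_{ℓ²(ℤ²)} for all finite sequences {c_{k,l}} (i.e., the twisted translates of φ_n form a Bessel sequence); one may take B = ‖φ₁‖^{2(n-1)}·B₂ for the constant B₂ of φ₂. -/

import Mathlib

open MeasureTheory

noncomputable def tT (k l : ℤ) (φ : ℝ × ℝ → ℂ) : ℝ × ℝ → ℂ :=
  fun p => Complex.exp (Real.pi * Complex.I * ((l : ℂ) * p.1 - (k : ℂ) * p.2)) *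
    φ (p.1 - k, p.2 - l)

noncomputable def tConv (F G : ℝ × ℝ → ℂ) : ℝ × ℝ → ℂ :=
  fun p => ∫ q : ℝ × ℝ, F (p.1 - q.1, p.2 - q.2) * G q *
    Complex.exp (Real.pi * Complex.I * ((q.1 : ℂ) * p.2 - (q.2 : ℂ) * p.1))

noncomputable def phi1 : ℝ × ℝ → ℂ :=
  fun p => if p.1 ∈ Set.Ico (0:ℝ) 1 ∧ p.2 ∈ Set.Ico (0:ℝ) 1 then 1 else 0

noncomputable def phiN : ℕ → (ℝ × ℝ → ℂ)
  | 0 => 0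
  | 1 => phi1
  | (n+2) => tConv (phiN (n+1)) phi1

/-!
The twisted translates of `φ₁` are supported on the pairwise disjoint lattice squares
`[k, k+1) × [l, l+1)`, so for `n = 1` the inequality is an equality with `B = 1`.
Twisted translation commutes with twisted convolution on the right, hence
`∑ c_{k,l} T_{(k,l)} φ_{n+1} = (∑ c_{k,l} T_{(k,l)} φ_n) × φ₁`, and `F ↦ F × φ₁` does not
increase the `L²` norm: pointwise `|F × φ₁| ≤ |F| ∗ |φ₁|` (ordinary convolution), and `|φ₁|` is
the indicator of a set of measure one, so Cauchy–Schwarz and Fubini apply. By induction `B = 1`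
works for every `n`.
-/

open scoped ENNReal

lemma sq_lintegral_le_lintegral_sq {α : Type*} [MeasurableSpace α] {μ : Measure α}
    [IsProbabilityMeasure μ] {f : α → ℝ≥0∞} (hf : AEMeasurable f μ) :
    (∫⁻ x, f x ∂μ) ^ 2 ≤ ∫⁻ x, f x ^ 2 ∂μ := by
  have h := eLpNorm_le_eLpNorm_of_exponent_le (p := 1) (q := 2) one_le_two
    hf.aestronglyMeasurable
  rw [eLpNorm_one_eq_lintegral_enorm,
    eLpNorm_eq_lintegral_rpow_enorm_toReal two_ne_zero ENNReal.ofNat_ne_top] at h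
  simp only [enorm_eq_self, ENNReal.toReal_ofNat, ENNReal.rpow_ofNat] at h
  calc (∫⁻ x, f x ∂μ) ^ 2 ≤ ((∫⁻ x, f x ^ 2 ∂μ) ^ (1 / 2 : ℝ)) ^ 2 := by gcongr
    _ = ∫⁻ x, f x ^ 2 ∂μ := by rw [← ENNReal.rpow_natCast, ← ENNReal.rpow_mul]; norm_num

lemma integral_norm_sq_eq_toReal_lintegral_enorm_sq {α E : Type*} [MeasurableSpace α]
    {μ : Measure α} [NormedAddCommGroup E] {f : α → E} (hf : AEStronglyMeasurable f μ) :
    ∫ x, ‖f x‖ ^ 2 ∂μ = (∫⁻ x, ‖f x‖ₑ ^ 2 ∂μ).toReal := by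
  rw [integral_eq_lintegral_of_nonneg_ae (f := fun x => ‖f x‖ ^ 2)
    (.of_forall fun x => by positivity) (hf.norm.pow 2)]
  simp_rw [ENNReal.ofReal_pow (norm_nonneg _), ofReal_norm]

lemma enorm_sum_sq_of_forall_ne_eq_zero {ι E : Type*} [NormedAddCommGroup E] (s : Finset ι)
    {f : ι → E} (a : ι) (hf : ∀ i ≠ a, f i = 0) :
    ‖∑ i ∈ s, f i‖ₑ ^ 2 = ∑ i ∈ s, ‖f i‖ₑ ^ 2 := by
  by_cases ha : a ∈ s
  · rw [Finset.sum_eq_single_of_mem a ha fun i _ hi => hf i hi,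
      Finset.sum_eq_single_of_mem a ha fun i _ hi => by simp [hf i hi]]
  · have hs : ∀ i ∈ s, f i = 0 := fun i hi => hf i (ne_of_mem_of_not_mem hi ha)
    rw [Finset.sum_eq_zero hs, Finset.sum_eq_zero fun i hi => by simp [hs i hi]]
    simp

lemma norm_exp_pi_mul_I_mul {w : ℂ} (hw : w.im = 0) :
    ‖Complex.exp (Real.pi * Complex.I * w)‖ = 1 := by
  simp [Complex.norm_exp, hw]

lemma norm_tT (k l : ℤ) (φ : ℝ × ℝ → ℂ) (z : ℝ × ℝ) :
    ‖tT k l φ z‖ = ‖φ (z - ((k : ℝ), (l : ℝ)))‖ := by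
  rw [tT, norm_mul, norm_exp_pi_mul_I_mul (by simp), one_mul]
  rfl

lemma enorm_tT (k l : ℤ) (φ : ℝ × ℝ → ℂ) (z : ℝ × ℝ) :
    ‖tT k l φ z‖ₑ = ‖φ (z - ((k : ℝ), (l : ℝ)))‖ₑ := by
  rw [← ofReal_norm, norm_tT, ofReal_norm]

lemma enorm_tConv_le (F G : ℝ × ℝ → ℂ) (z : ℝ × ℝ) :
    ‖tConv F G z‖ₑ ≤ ∫⁻ q, ‖F (z - q)‖ₑ * ‖G q‖ₑ := by
  refine (enorm_integral_le_lintegral_enorm _).trans (lintegral_mono fun q => ?_)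
  rw [enorm_mul, enorm_mul, ← ofReal_norm (Complex.exp _), norm_exp_pi_mul_I_mul (by simp),
    ENNReal.ofReal_one, mul_one]
  rfl

lemma lintegral_enorm_tT_sq (k l : ℤ) (φ : ℝ × ℝ → ℂ) :
    ∫⁻ z, ‖tT k l φ z‖ₑ ^ 2 = ∫⁻ z, ‖φ z‖ₑ ^ 2 := by
  simp_rw [enorm_tT]
  exact lintegral_sub_right_eq_self (fun z => ‖φ z‖ₑ ^ 2) _

lemma tConv_tT (k l : ℤ) (F G : ℝ × ℝ → ℂ) :
    tConv (tT k l F) G = tT k l (tConv F G) := by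
  funext z
  rw [tT, tConv, tConv, ← integral_const_mul]
  congr 1
  funext q
  simp only [tT]
  have hshift : F (z.1 - q.1 - k, z.2 - q.2 - l) = F (z.1 - k - q.1, z.2 - l - q.2) := by
    rw [sub_right_comm z.1, sub_right_comm z.2]
  have hphase :
      Complex.exp (Real.pi * Complex.I *
          ((l : ℂ) * (z.1 - q.1 : ℝ) - (k : ℂ) * (z.2 - q.2 : ℝ))) *
        Complex.exp (Real.pi * Complex.I * ((q.1 : ℂ) * z.2 - (q.2 : ℂ) * z.1)) =
      Complex.exp (Real.pi * Complex.I * ((l : ℂ) * z.1 - (k : ℂ) * z.2)) *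
        Complex.exp (Real.pi * Complex.I *
          ((q.1 : ℂ) * (z.2 - l : ℝ) - (q.2 : ℂ) * (z.1 - k : ℝ))) := by
    rw [← Complex.exp_add, ← Complex.exp_add]
    congr 1
    push_cast
    ring
  rw [hshift]
  linear_combination F (z.1 - k - q.1, z.2 - l - q.2) * G q * hphase

lemma measurable_tT (k l : ℤ) {φ : ℝ × ℝ → ℂ} (hφ : Measurable φ) :
    Measurable (tT k l φ) :=
  (Complex.measurable_exp.comp (by fun_prop)).mul (hφ.comp (by fun_prop))

lemma measurable_tConv {F G : ℝ × ℝ → ℂ} (hF : Measurable F) (hG : Measurable G) :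
    Measurable (tConv F G) := by
  have h : StronglyMeasurable (Function.uncurry fun z q : ℝ × ℝ =>
      F (z.1 - q.1, z.2 - q.2) * G q *
        Complex.exp (Real.pi * Complex.I * ((q.1 : ℂ) * z.2 - (q.2 : ℂ) * z.1))) :=
    (((hF.comp (by fun_prop)).mul (hG.comp measurable_snd)).mul
      (Complex.measurable_exp.comp (by fun_prop))).stronglyMeasurable
  exact h.integral_prod_right'.measurable

lemma integrable_tConv_integrand {F G : ℝ × ℝ → ℂ} {C : ℝ} (hF : Measurable F)
    (hFC : ∀ z, ‖F z‖ ≤ C) (hG : Integrable G) (z : ℝ × ℝ) :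
    Integrable fun q : ℝ × ℝ => F (z.1 - q.1, z.2 - q.2) * G q *
      Complex.exp (Real.pi * Complex.I * ((q.1 : ℂ) * z.2 - (q.2 : ℂ) * z.1)) :=
  (hG.bdd_mul (hF.comp (by fun_prop)).aestronglyMeasurable
    (.of_forall fun q => hFC _)).mul_bdd
    (Complex.measurable_exp.comp (by fun_prop)).aestronglyMeasurable
    (.of_forall fun q => (norm_exp_pi_mul_I_mul (by simp)).le)

lemma tConv_sum_mul {ι : Type*} (s : Finset ι) (c : ι → ℂ) {F : ι → ℝ × ℝ → ℂ}
    (G : ℝ × ℝ → ℂ) (z : ℝ × ℝ)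
    (hint : ∀ i ∈ s, Integrable fun q : ℝ × ℝ => F i (z.1 - q.1, z.2 - q.2) * G q *
      Complex.exp (Real.pi * Complex.I * ((q.1 : ℂ) * z.2 - (q.2 : ℂ) * z.1))) :
    tConv (fun w => ∑ i ∈ s, c i * F i w) G z = ∑ i ∈ s, c i * tConv (F i) G z := by
  simp only [tConv, ← integral_const_mul]
  rw [← integral_finsetSum s fun i hi => (hint i hi).const_mul (c i)]
  congr 1
  funext q
  rw [Finset.sum_mul, Finset.sum_mul]
  exact Finset.sum_congr rfl fun i _ => by ring

noncomputable def tTSum (s : Finset (ℤ × ℤ)) (c : ℤ × ℤ → ℂ) (φ : ℝ × ℝ → ℂ) :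
    ℝ × ℝ → ℂ :=
  fun z => ∑ p ∈ s, c p * tT p.1 p.2 φ z

lemma measurable_tTSum (s : Finset (ℤ × ℤ)) (c : ℤ × ℤ → ℂ) {φ : ℝ × ℝ → ℂ}
    (hφ : Measurable φ) : Measurable (tTSum s c φ) :=
  Finset.measurable_sum s fun p _ => (measurable_tT p.1 p.2 hφ).const_mul (c p)

lemma tTSum_tConv (s : Finset (ℤ × ℤ)) (c : ℤ × ℤ → ℂ) {F G : ℝ × ℝ → ℂ} {C : ℝ}
    (hF : Measurable F) (hFC : ∀ z, ‖F z‖ ≤ C) (hG : Integrable G) :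
    tTSum s c (tConv F G) = tConv (tTSum s c F) G := by
  funext z
  unfold tTSum
  rw [tConv_sum_mul s c G z fun p _ => integrable_tConv_integrand
    (measurable_tT p.1 p.2 hF) (fun w => (norm_tT p.1 p.2 F w).trans_le (hFC _)) hG z]
  simp_rw [tConv_tT]

def unitSq : Set (ℝ × ℝ) := Set.Ico 0 1 ×ˢ Set.Ico 0 1

lemma measurableSet_unitSq : MeasurableSet unitSq :=
  measurableSet_Ico.prod measurableSet_Ico

lemma volume_unitSq : volume unitSq = 1 := by
  rw [unitSq, Measure.volume_eq_prod, Measure.prod_prod]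
  simp

instance : IsProbabilityMeasure (volume.restrict unitSq) :=
  ⟨by rw [Measure.restrict_apply_univ, volume_unitSq]⟩

lemma phi1_eq_indicator : phi1 = unitSq.indicator 1 := by
  funext p
  simp only [phi1, unitSq, Set.indicator, Set.mem_prod, Pi.one_apply]

lemma enorm_phi1 (z : ℝ × ℝ) : ‖phi1 z‖ₑ = unitSq.indicator 1 z := by
  rw [phi1_eq_indicator]
  by_cases hz : z ∈ unitSq <;> simp [hz]

lemma measurable_phi1 : Measurable phi1 := by
  rw [phi1_eq_indicator]
  exact measurable_one.indicator measurableSet_unitSq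

lemma integrable_phi1 : Integrable phi1 := by
  rw [phi1_eq_indicator]
  exact (integrable_indicator_iff measurableSet_unitSq).2
    (integrableOn_const (by rw [volume_unitSq]; exact ENNReal.one_ne_top))

lemma enorm_tConv_phi1_le (F : ℝ × ℝ → ℂ) (z : ℝ × ℝ) :
    ‖tConv F phi1 z‖ₑ ≤ ∫⁻ q in unitSq, ‖F (z - q)‖ₑ := by
  refine (enorm_tConv_le F phi1 z).trans_eq ?_
  rw [← lintegral_indicator measurableSet_unitSq]
  congr 1
  funext q
  by_cases hq : q ∈ unitSq <;> simp [enorm_phi1, hq]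

lemma norm_tConv_phi1_le {F : ℝ × ℝ → ℂ} (hF : ∀ z, ‖F z‖ ≤ 1) (z : ℝ × ℝ) :
    ‖tConv F phi1 z‖ ≤ 1 := by
  have h : ‖tConv F phi1 z‖ₑ ≤ 1 :=
    calc ‖tConv F phi1 z‖ₑ ≤ ∫⁻ q in unitSq, ‖F (z - q)‖ₑ := enorm_tConv_phi1_le F z
      _ ≤ ∫⁻ q in unitSq, 1 := lintegral_mono fun q => by
        rw [← ofReal_norm]; exact ENNReal.ofReal_le_one.2 (hF _)
      _ = 1 := by rw [setLIntegral_const, volume_unitSq, one_mul]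
  rwa [← ofReal_norm, ENNReal.ofReal_le_one] at h

lemma lintegral_enorm_tConv_phi1_sq_le {F : ℝ × ℝ → ℂ} (hF : Measurable F) :
    ∫⁻ z, ‖tConv F phi1 z‖ₑ ^ 2 ≤ ∫⁻ z, ‖F z‖ₑ ^ 2 :=
  calc ∫⁻ z, ‖tConv F phi1 z‖ₑ ^ 2 ≤ ∫⁻ z, (∫⁻ q in unitSq, ‖F (z - q)‖ₑ) ^ 2 := by
        gcongr with z; exact enorm_tConv_phi1_le F z
    _ ≤ ∫⁻ z, ∫⁻ q in unitSq, ‖F (z - q)‖ₑ ^ 2 := by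
        gcongr with z
        exact sq_lintegral_le_lintegral_sq (hF.comp (by fun_prop)).enorm.aemeasurable
    _ = ∫⁻ q in unitSq, ∫⁻ z, ‖F (z - q)‖ₑ ^ 2 :=
        lintegral_lintegral_swap ((hF.comp (by fun_prop)).enorm.pow_const 2).aemeasurable
    _ = ∫⁻ z, ‖F z‖ₑ ^ 2 := by
        simp_rw [lintegral_sub_right_eq_self (fun z => ‖F z‖ₑ ^ 2)]
        rw [setLIntegral_const, volume_unitSq, mul_one]

lemma lintegral_enorm_phi1_sq : ∫⁻ z, ‖phi1 z‖ₑ ^ 2 = 1 := by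
  have h : ∀ z, ‖phi1 z‖ₑ ^ 2 = unitSq.indicator 1 z := fun z => by
    by_cases hz : z ∈ unitSq <;> simp [enorm_phi1, hz]
  simp_rw [h]
  rw [lintegral_indicator_one measurableSet_unitSq, volume_unitSq]

lemma tT_phi1_eq_zero {p : ℤ × ℤ} {z : ℝ × ℝ} (hp : p ≠ (⌊z.1⌋, ⌊z.2⌋)) :
    tT p.1 p.2 phi1 z = 0 := by
  rw [tT, phi1, if_neg, mul_zero]
  rintro ⟨⟨h1, h2⟩, h3, h4⟩
  refine hp (Prod.ext ?_ ?_) <;> symm <;> rw [Int.floor_eq_iff] <;> constructor <;>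
    linarith

lemma lintegral_enorm_tTSum_phi1_sq (s : Finset (ℤ × ℤ)) (c : ℤ × ℤ → ℂ) :
    ∫⁻ z, ‖tTSum s c phi1 z‖ₑ ^ 2 = ∑ p ∈ s, ‖c p‖ₑ ^ 2 := by
  have hdisj : ∀ z, ‖tTSum s c phi1 z‖ₑ ^ 2 = ∑ p ∈ s, ‖c p * tT p.1 p.2 phi1 z‖ₑ ^ 2 :=
    fun z => enorm_sum_sq_of_forall_ne_eq_zero s (⌊z.1⌋, ⌊z.2⌋) fun p hp => by
      rw [tT_phi1_eq_zero hp, mul_zero]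
  simp_rw [hdisj, enorm_mul, mul_pow]
  rw [lintegral_finsetSum s fun p _ =>
    ((measurable_tT p.1 p.2 measurable_phi1).enorm.pow_const 2).const_mul _]
  refine Finset.sum_congr rfl fun p _ => ?_
  rw [lintegral_const_mul _ ((measurable_tT p.1 p.2 measurable_phi1).enorm.pow_const 2),
    lintegral_enorm_tT_sq, lintegral_enorm_phi1_sq, mul_one]

lemma measurable_phiN (n : ℕ) : Measurable (phiN n) := by
  induction n using phiN.induct with
  | case1 => exact measurable_const
  | case2 => exact measurable_phi1
  | case3 n ih => exact measurable_tConv ih measurable_phi1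

lemma norm_phiN_le (n : ℕ) (z : ℝ × ℝ) : ‖phiN n z‖ ≤ 1 := by
  induction n using phiN.induct generalizing z with
  | case1 => simp [phiN]
  | case2 => rw [phiN, phi1]; split_ifs <;> simp
  | case3 n ih => exact norm_tConv_phi1_le ih z

lemma lintegral_enorm_tTSum_phiN_sq_le (n : ℕ) (s : Finset (ℤ × ℤ)) (c : ℤ × ℤ → ℂ) :
    ∫⁻ z, ‖tTSum s c (phiN n) z‖ₑ ^ 2 ≤ ∑ p ∈ s, ‖c p‖ₑ ^ 2 := by
  induction n using phiN.induct with
  | case1 => simp [tTSum, tT, phiN]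
  | case2 => exact (lintegral_enorm_tTSum_phi1_sq s c).le
  | case3 n ih =>
    rw [phiN, tTSum_tConv s c (measurable_phiN _) (norm_phiN_le _) integrable_phi1]
    exact (lintegral_enorm_tConv_phi1_sq_le
      (measurable_tTSum s c (measurable_phiN _))).trans ih

theorem phiN_bessel_general (n : ℕ) :
    ∃ B : ℝ, 0 < B ∧
      ∀ (s : Finset (ℤ × ℤ)) (c : ℤ × ℤ → ℂ),
        (∫ z : ℝ × ℝ, ‖∑ p ∈ s, c p * tT p.1 p.2 (phiN n) z‖ ^ 2) ≤
          B * ∑ p ∈ s, ‖c p‖ ^ 2 := by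
  refine ⟨1, one_pos, fun s c => ?_⟩
  have hfin : ∀ p ∈ s, ‖c p‖ₑ ^ 2 ≠ ⊤ := fun p _ => ENNReal.pow_ne_top enorm_ne_top
  calc ∫ z, ‖tTSum s c (phiN n) z‖ ^ 2
      = (∫⁻ z, ‖tTSum s c (phiN n) z‖ₑ ^ 2).toReal :=
        integral_norm_sq_eq_toReal_lintegral_enorm_sq
          (measurable_tTSum s c (measurable_phiN n)).aestronglyMeasurable
    _ ≤ (∑ p ∈ s, ‖c p‖ₑ ^ 2).toReal :=
        ENNReal.toReal_mono (ENNReal.sum_ne_top.2 hfin)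
          (lintegral_enorm_tTSum_phiN_sq_le n s c)
    _ = 1 * ∑ p ∈ s, ‖c p‖ ^ 2 := by
        rw [one_mul, ENNReal.toReal_sum hfin]
        simp

theorem phiN_bessel (n : ℕ) (hn : 1 ≤ n) :
    ∃ B : ℝ, 0 < B ∧
      ∀ (s : Finset (ℤ × ℤ)) (c : ℤ × ℤ → ℂ),
        (∫ z : ℝ × ℝ, ‖∑ p ∈ s, c p * tT p.1 p.2 (phiN n) z‖ ^ 2) ≤
          B * ∑ p ∈ s, ‖c p‖ ^ 2 :=
  phiN_bessel_general n
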